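/- arXiv:0804.3764 — 2 statements merged into one kernel-verified Lean document; each statement's English description precedes it below -/
import Mathlib

section
/- Let A be a Banach algebra and E a closed subspace of the dual A' such that the natural map ι_E : A → E' (given by ι_E(a)(μ) = μ(a)) is an isomorphism of Banach spaces. Then the multiplication on A is separately continuous for the weak* topology σ(A, E) if and only if E is a sub-bimodule of A' for the canonical A-bimodule actions on A'. -/
/-!
A linear functional that is continuous for the topology induced by a family of linear
functionals lies in their span, so the `σ(A, E)`-continuous functionals on `A` are exactly the
elements of `E`. Hence a bounded operator `T` on `A` is `σ(A, E)`-continuous iff its transpose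
`μ ↦ μ ∘ T` maps `E` into itself; for `T` left or right multiplication by `a` the transposes
are the two module actions of `a` on `A'`.
-/

open NormedSpace

/-- The weak* topology `σ(A, E)` on `A` induced by a subspace `E` of the dual `A'`. -/
noncomputable def weakStarTopology {A : Type*} [NormedRing A] [NormedAlgebra ℂ A]
    (E : Submodule ℂ (StrongDual ℂ A)) : TopologicalSpace A :=
  TopologicalSpace.induced (fun a => fun μ : E => (μ : StrongDual ℂ A) a) inferInstance

open Topology

section

variable {A : Type*} [NormedRing A] [NormedAlgebra ℂ A] (E : Submodule ℂ (StrongDual ℂ A))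

theorem weakStarTopology_eq_iInf :
    weakStarTopology E = ⨅ μ : E, .induced ((μ : StrongDual ℂ A) : A →ₗ[ℂ] ℂ) inferInstance :=
  induced_to_pi _

theorem continuous_weakStarTopology_iff_mem {f : StrongDual ℂ A} :
    Continuous[weakStarTopology E, _] f ↔ f ∈ E := by
  rw [weakStarTopology_eq_iInf]
  refine (LinearMap.mem_span_iff_continuous
    (f := fun μ : E => ((μ : StrongDual ℂ A) : A →ₗ[ℂ] ℂ)) (f : A →ₗ[ℂ] ℂ)).symm.trans ?_
  have hrange : Set.range (fun μ : E => ((μ : StrongDual ℂ A) : A →ₗ[ℂ] ℂ)) =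
      ContinuousLinearMap.coeLM ℂ '' (E : Set (StrongDual ℂ A)) :=
    (Set.image_eq_range _ _).symm
  rw [hrange, Submodule.span_image, Submodule.span_eq]
  exact ⟨fun ⟨g, hg, hgf⟩ => ContinuousLinearMap.coe_injective hgf ▸ hg, fun hf => ⟨f, hf, rfl⟩⟩

theorem continuous_weakStarTopology_iff {X : Type*} {tX : TopologicalSpace X} {g : X → A} :
    Continuous[tX, weakStarTopology E] g ↔
      ∀ μ ∈ E, Continuous[tX, _] fun x => (μ : StrongDual ℂ A) (g x) := by
  rw [weakStarTopology, continuous_induced_rng, continuous_pi_iff, Subtype.forall]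
  rfl

theorem continuous_weakStarTopology_iff_comp_mem (T : A →L[ℂ] A) :
    Continuous[weakStarTopology E, weakStarTopology E] T ↔ ∀ μ ∈ E, μ.comp T ∈ E :=
  (continuous_weakStarTopology_iff E).trans
    (forall₂_congr fun μ _ => continuous_weakStarTopology_iff_mem E (f := μ.comp T))

end

theorem weakStar_separately_continuous_iff_submodule_general
    (A : Type*) [NormedRing A] [NormedAlgebra ℂ A]
    (E : Submodule ℂ (StrongDual ℂ A)) :
    (∀ a : A,
        @Continuous A A (weakStarTopology E) (weakStarTopology E) (fun b : A => a * b) ∧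
        @Continuous A A (weakStarTopology E) (weakStarTopology E) (fun b : A => b * a)) ↔
      (∀ (a : A), ∀ μ ∈ E,
        μ.comp (ContinuousLinearMap.mul ℂ A a) ∈ E ∧
        μ.comp ((ContinuousLinearMap.mul ℂ A).flip a) ∈ E) := by
  refine forall_congr' fun a => ?_
  rw [forall₂_and]
  exact (continuous_weakStarTopology_iff_comp_mem E (ContinuousLinearMap.mul ℂ A a)).and
    (continuous_weakStarTopology_iff_comp_mem E ((ContinuousLinearMap.mul ℂ A).flip a))

/-- For a Banach algebra `A` and a closed subspace `E ⊆ A'` such that the natural map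
`ι_E : A → E'` is an isomorphism, the multiplication of `A` is separately
`σ(A,E)`-continuous if and only if `E` is a sub-bimodule of `A'` for the canonical
`A`-bimodule actions. -/
theorem weakStar_separately_continuous_iff_submodule
    (A : Type*) [NormedRing A] [NormedAlgebra ℂ A] [CompleteSpace A]
    (E : Submodule ℂ (StrongDual ℂ A)) (hclosed : IsClosed (E : Set (StrongDual ℂ A)))
    (hiso : Function.Bijective fun a : A => (inclusionInDoubleDual ℂ A a).comp E.subtypeL) :
    (∀ a : A,
        @Continuous A A (weakStarTopology E) (weakStarTopology E) (fun b : A => a * b) ∧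
        @Continuous A A (weakStarTopology E) (weakStarTopology E) (fun b : A => b * a)) ↔
      (∀ (a : A), ∀ μ ∈ E,
        μ.comp (ContinuousLinearMap.mul ℂ A a) ∈ E ∧
        μ.comp ((ContinuousLinearMap.mul ℂ A).flip a) ∈ E) :=
  weakStar_separately_continuous_iff_submodule_general A E
end

section
/- Let M be a unital C*-algebra spanned by its unitaries (e.g. a von Neumann algebra or any unital C*-algebra), let C be a unital C*-algebra, and let α : M → C be an isometric unital algebra homomorphism. Then α is *-preserving: α(x*) = α(x)* for all x ∈ M. -/
/-!
For a unitary `u`, the element `α u` is invertible with inverse `α (star u)`, and both have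
norm at most one. In a C*-algebra this forces `α u` to be unitary: `b = star (α u) * α u` is
positive with `‖b‖ ≤ 1` and `‖b⁻¹‖ ≤ 1`, so `b ≤ 1 ≤ b`. Hence `α` commutes with `star` on
unitaries, and both sides of `α (star x) = star (α x)` are additive and conjugate-homogeneous
in `x`, so the identity spreads to the span of the unitaries.
-/

theorem CStarRing.norm_le_one_of_mem_unitary {E : Type*} [NormedRing E] [StarRing E] [CStarRing E]
    {U : E} (hU : U ∈ unitary E) : ‖U‖ ≤ 1 := by
  rcases subsingleton_or_nontrivial E with _ | _
  · simp [Subsingleton.elim U 0]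
  · exact (norm_of_mem_unitary hU).le

namespace CStarAlgebra

variable {A : Type*} [CStarAlgebra A]

theorem eq_one_of_nonneg_of_norm_le_one_of_norm_inv_le_one [PartialOrder A] [StarOrderedRing A]
    {b : Aˣ} (hb : 0 ≤ (b : A)) (h : ‖(b : A)‖ ≤ 1) (h_inv : ‖(↑b⁻¹ : A)‖ ≤ 1) : (b : A) = 1 :=
  le_antisymm ((norm_le_one_iff_of_nonneg _ hb).mp h) <| (inv_le_one_iff_one_le hb).mp <|
    (norm_le_one_iff_of_nonneg _ (CFC.inv_nonneg_of_nonneg b hb)).mp h_inv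

theorem coe_mem_unitary_of_norm_le_one (a : Aˣ) (h : ‖(a : A)‖ ≤ 1)
    (h_inv : ‖(↑a⁻¹ : A)‖ ≤ 1) : (a : A) ∈ unitary A := by
  let _ := spectralOrder A
  let _ := spectralOrderedRing A
  refine a.isUnit.mem_unitary_of_star_mul_self ?_
  have hb : ((star a * a : Aˣ) : A) = star (a : A) * a := rfl
  have hb_inv : (↑(star a * a)⁻¹ : A) = ↑a⁻¹ * star (↑a⁻¹ : A) := by
    simp [mul_inv_rev, Units.coe_star_inv]
  rw [← hb]
  refine eq_one_of_nonneg_of_norm_le_one_of_norm_inv_le_one ?_ ?_ ?_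
  · exact hb ▸ star_mul_self_nonneg _
  · rw [hb, CStarRing.norm_star_mul_self]; exact mul_le_one₀ h (norm_nonneg _) h
  · rw [hb_inv, CStarRing.norm_self_mul_star]; exact mul_le_one₀ h_inv (norm_nonneg _) h_inv

end CStarAlgebra

theorem map_star_of_mem_unitary {M C F : Type*} [NormedRing M] [StarRing M] [CStarRing M]
    [CStarAlgebra C] [FunLike F M C] [MonoidHomClass F M C] (α : F) (hα : ∀ x, ‖α x‖ = ‖x‖)
    {u : M} (hu : u ∈ unitary M) : α (star u) = star (α u) := by
  let a : Cˣ := Units.map (α : M →* C) (Unitary.toUnits ⟨u, hu⟩)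
  have ha : (a : C) ∈ unitary C := by
    refine CStarAlgebra.coe_mem_unitary_of_norm_le_one a ?_ ?_
    · exact (hα u).trans_le (CStarRing.norm_le_one_of_mem_unitary hu)
    · exact (hα _).trans_le (CStarRing.norm_le_one_of_mem_unitary (Unitary.star_mem hu))
  exact Units.inv_eq_of_mul_eq_one_right (Unitary.mul_star_self_of_mem ha)

theorem isometric_algHom_star_preserving_general
    (M C : Type*) [NormedRing M] [StarRing M] [CStarRing M]
    [NormedAlgebra ℂ M] [StarModule ℂ M]
    [NormedRing C] [StarRing C] [CStarRing C] [CompleteSpace C]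
    [NormedAlgebra ℂ C] [StarModule ℂ C]
    (hspan : Submodule.span ℂ (unitary M : Set M) = ⊤)
    (α : M →ₐ[ℂ] C) (hiso : ∀ x : M, ‖α x‖ = ‖x‖) :
    ∀ x : M, α (star x) = star (α x) := by
  let _ : CStarAlgebra C := {}
  intro x
  induction hspan ▸ Submodule.mem_top (x := x) using Submodule.span_induction with
  | mem u hu => exact map_star_of_mem_unitary α hiso hu
  | zero => simp
  | add x y _ _ hx hy => simp [hx, hy]
  | smul c x _ hx => simp [hx]

/-- An isometric unital algebra homomorphism from a unital C*-algebra spanned by its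
unitaries into a unital C*-algebra is automatically *-preserving. -/
theorem isometric_algHom_star_preserving
    (M C : Type*) [NormedRing M] [StarRing M] [CStarRing M] [CompleteSpace M]
    [NormedAlgebra ℂ M] [StarModule ℂ M]
    [NormedRing C] [StarRing C] [CStarRing C] [CompleteSpace C]
    [NormedAlgebra ℂ C] [StarModule ℂ C]
    (hspan : Submodule.span ℂ (unitary M : Set M) = ⊤)
    (α : M →ₐ[ℂ] C) (hiso : ∀ x : M, ‖α x‖ = ‖x‖) :
    ∀ x : M, α (star x) = star (α x) :=
  isometric_algHom_star_preserving_general M C hspan α hiso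
end
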